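/- arXiv:1008.3217 — 4 statements merged into one kernel-verified Lean document; each statement's English description precedes it below -/
import Mathlib

section
/- Let G be a graph admitting an SEDF f, and suppose G contains a cycle C_n as a subgraph with vertices v_1, ..., v_n. Then Σ_{i=1}^{n} s_{v_i} ≥ 0. -/
open scoped Classical

noncomputable def edgeFin {V : Type*} [Fintype V] (G : SimpleGraph V) : Finset (Sym2 V) :=
  Finset.univ.filter (· ∈ G.edgeSet)

noncomputable def closedNbhd {V : Type*} [Fintype V] (G : SimpleGraph V) (e : Sym2 V) :
    Finset (Sym2 V) :=
  (edgeFin G).filter (fun e' => ∃ v, v ∈ e ∧ v ∈ e')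

def IsSEDF {V : Type*} [Fintype V] (G : SimpleGraph V) (f : Sym2 V → ℤ) : Prop :=
  (∀ e ∈ edgeFin G, f e = 1 ∨ f e = -1) ∧
  ∀ e ∈ edgeFin G, 1 ≤ ∑ e' ∈ closedNbhd G e, f e'

noncomputable def vsum {V : Type*} [Fintype V] (G : SimpleGraph V) (f : Sym2 V → ℤ) (v : V) : ℤ :=
  ∑ e ∈ (edgeFin G).filter (fun e => v ∈ e), f e

noncomputable def gammaS {V : Type*} [Fintype V] (G : SimpleGraph V) : ℤ :=
  sInf {z : ℤ | ∃ f, IsSEDF G f ∧ z = ∑ e ∈ edgeFin G, f e}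

def IsLGraph {V : Type*} [Fintype V] (m n : ℕ) (G : SimpleGraph V) : Prop :=
  Fintype.card V = (n + 1) * (m * n + m + 1) ∧
  ∃ P : Fin (n + 1) → Finset V,
    (∀ v : V, ∃! i, v ∈ P i) ∧
    (∀ i, (P i).card = m * n + m + 1) ∧
    (∀ u ∈ P 0, ∀ v ∈ P 0, u ≠ v → G.Adj u v) ∧
    (∀ i, i ≠ 0 → ∀ u ∈ P i, ∀ v ∈ P i, ¬ G.Adj u v) ∧
    (∀ i, i ≠ 0 → ∀ v ∈ P i, ((P 0).filter (G.Adj v)).card = m) ∧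
    (∀ i, i ≠ 0 → ∀ v ∈ P 0, ((P i).filter (G.Adj v)).card = m) ∧
    (∀ i j, i ≠ 0 → j ≠ 0 → i ≠ j → ∀ u ∈ P i, ∀ v ∈ P j, ¬ G.Adj u v)

def MConnected {V : Type*} [Fintype V] (m : ℕ) (G : SimpleGraph V) : Prop :=
  m < Fintype.card V ∧
  ∀ S : Finset V, S.card < m → (G.induce ((↑S : Set V)ᶜ)).Connected

def IsElementary {V : Type*} (H : SimpleGraph V) : Prop :=
  (∀ v, (H.neighborSet v).ncard ≤ 2) ∧
  ∀ v, (H.neighborSet v).ncard = 1 → ∀ w, H.Adj v w → (H.neighborSet w).ncard = 1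

/-! Summing the SEDF condition `1 ≤ s_a + s_b - f(ab)` together with `f(ab) ≥ -1` gives
`s_a + s_b ≥ 0` on every edge `ab`. Adding this over the `n` edges of the cycle counts every
`s_{v_i}` exactly twice. -/

section

variable {V : Type*} [Fintype V] {G : SimpleGraph V} {f : Sym2 V → ℤ}

lemma mem_edgeFin {e : Sym2 V} : e ∈ edgeFin G ↔ e ∈ G.edgeSet := by
  simp [edgeFin]

lemma closedNbhd_eq_union {a b : V} :
    closedNbhd G s(a, b) =
      (edgeFin G).filter (a ∈ ·) ∪ (edgeFin G).filter (b ∈ ·) := by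
  rw [closedNbhd, ← Finset.filter_or]
  refine Finset.filter_congr fun e _ => ?_
  simp only [Sym2.mem_iff, exists_eq_or_imp, exists_eq_left]

lemma filter_mem_inter_filter_mem {a b : V} (hab : G.Adj a b) :
    (edgeFin G).filter (a ∈ ·) ∩ (edgeFin G).filter (b ∈ ·) = {s(a, b)} := by
  rw [← Finset.filter_and]
  ext e
  simp only [Finset.mem_filter, Finset.mem_singleton]
  constructor
  · rintro ⟨-, hae, hbe⟩
    exact (Sym2.mem_and_mem_iff hab.ne).mp ⟨hae, hbe⟩
  · rintro rfl
    exact ⟨mem_edgeFin.mpr hab, Sym2.mem_mk_left a b, Sym2.mem_mk_right a b⟩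

lemma sum_closedNbhd_eq {a b : V} (hab : G.Adj a b) :
    ∑ e ∈ closedNbhd G s(a, b), f e = vsum G f a + vsum G f b - f s(a, b) := by
  have h := Finset.sum_union_inter (f := f)
    (s₁ := (edgeFin G).filter (a ∈ ·)) (s₂ := (edgeFin G).filter (b ∈ ·))
  rw [filter_mem_inter_filter_mem hab, Finset.sum_singleton] at h
  rw [closedNbhd_eq_union, vsum, vsum]
  linarith

lemma IsSEDF.vsum_add_vsum_nonneg (hf : IsSEDF G f) {a b : V} (hab : G.Adj a b) :
    0 ≤ vsum G f a + vsum G f b := by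
  have hedge : s(a, b) ∈ edgeFin G := mem_edgeFin.mpr hab
  have hnbhd := hf.2 _ hedge
  rw [sum_closedNbhd_eq hab] at hnbhd
  rcases hf.1 _ hedge with h | h <;> omega

lemma IsSEDF.sum_vsum_nonneg {ι : Type*} [Fintype ι] (hf : IsSEDF G f) (c : ι → V)
    (σ : Equiv.Perm ι) (hadj : ∀ i, G.Adj (c i) (c (σ i))) :
    0 ≤ ∑ i, vsum G f (c i) := by
  have hshift : ∑ i, vsum G f (c (σ i)) = ∑ i, vsum G f (c i) :=
    Equiv.sum_comp σ fun i => vsum G f (c i)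
  have hpairs : 0 ≤ ∑ i, (vsum G f (c i) + vsum G f (c (σ i))) :=
    Finset.sum_nonneg fun i _ => hf.vsum_add_vsum_nonneg (hadj i)
  rw [Finset.sum_add_distrib, hshift] at hpairs
  linarith

end

theorem stmt2 {V : Type*} [Fintype V] (G : SimpleGraph V) (f : Sym2 V → ℤ)
    (hf : IsSEDF G f) (n : ℕ) (hn : 3 ≤ n) (c : Fin n → V)
    (hcyc : ∀ i : Fin n, G.Adj (c i) (c (i + ⟨1, by omega⟩))) :
    0 ≤ ∑ i : Fin n, vsum G f (c i) := by
  have : NeZero n := ⟨by omega⟩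
  exact hf.sum_vsum_nonneg c (Equiv.addRight ⟨1, by omega⟩) hcyc
end

section
/- For any m and n, every L_(m,n)-graph is m-connected. -/
open scoped Classical

/-! The clique `V₁` survives the deletion of fewer than `m` vertices, and every other vertex keeps
at least one of its `m` neighbours in `V₁`; so all remaining vertices reach a surviving vertex of
`V₁`. -/

namespace SimpleGraph

variable {V : Type*} {G : SimpleGraph V}

theorem connected_induce_compl_of_dominating_clique {K S : Finset V}
    (hK : G.IsClique (K : Set V)) (hSK : S.card < K.card)
    (hdom : ∀ v ∉ K, S.card < (K.filter (G.Adj v)).card) :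
    (G.induce ((S : Set V)ᶜ)).Connected := by
  obtain ⟨z, hzK, hzS⟩ := Finset.exists_mem_notMem_of_card_lt_card hSK
  have reach_z : ∀ u (hu : u ∉ S), u ∈ K →
      (G.induce ((S : Set V)ᶜ)).Reachable ⟨z, hzS⟩ ⟨u, hu⟩ := by
    intro u hu huK
    by_cases huz : z = u
    · subst huz; rfl
    · exact Adj.reachable (show G.Adj z u from hK hzK huK huz)
  refine (connected_iff_exists_forall_reachable _).2 ⟨⟨z, hzS⟩, fun ⟨a, ha⟩ => ?_⟩
  by_cases haK : a ∈ K
  · exact reach_z a ha haK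
  · obtain ⟨u, hu, huS⟩ := Finset.exists_mem_notMem_of_card_lt_card (hdom a haK)
    rw [Finset.mem_filter] at hu
    exact (reach_z u huS hu.1).trans
      (Adj.reachable (show G.Adj u a from hu.2.symm))

theorem mConnected_of_dominating_clique [Fintype V] {m : ℕ} {K : Finset V}
    (hK : G.IsClique (K : Set V)) (hm : m < K.card)
    (hdom : ∀ v ∉ K, m ≤ (K.filter (G.Adj v)).card) :
    MConnected m G :=
  ⟨hm.trans_le (Finset.card_le_univ K), fun _ hS =>
    connected_induce_compl_of_dominating_clique hK (hS.trans hm)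
      fun v hv => hS.trans_le (hdom v hv)⟩

end SimpleGraph

theorem stmt5 {V : Type*} [Fintype V] (m n : ℕ) (G : SimpleGraph V)
    (hG : IsLGraph m n G) : MConnected m G := by
  obtain ⟨-, P, huniq, hsize, hclique, -, hdeg, -⟩ := hG
  refine SimpleGraph.mConnected_of_dominating_clique (K := P 0)
    (fun u hu v hv huv => hclique u hu v hv huv) (by rw [hsize 0]; omega) fun v hv => ?_
  obtain ⟨i, hvi, -⟩ := huniq v
  have hi : i ≠ 0 := by rintro rfl; exact hv hvi
  exact (hdeg i hi v hvi).ge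
end

section
/- Let G be a graph of order n, let H be an elementary subgraph of G (each component of H is an edge or a cycle) of maximum number of vertices in which every cycle is odd, and let v be a vertex of G not covered by H. Then the degree of v in G is at most (n − α)/2, where α is the number of vertices of G not covered by H. -/
open scoped Classical

/-!
Let `A` be the set of `G`-neighbours of the uncovered vertex `v`. Maximality of `H` forces
`A ⊆ V(H)` (otherwise add an edge `v u`) and makes `A` independent in `H`: an `H`-edge `u u'`
inside `A` is either a component of `H`, which `v` completes to a triangle, or lies on a cycle,
which can be rerouted through `v`; either way `v` gets covered as well.
In an elementary graph adjacent vertices have equal degree, so letting each `a ∈ A` spread weight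
`1 / deg a` over its `H`-neighbours shows `|A| ≤ |N_H(A)|`. As `A` and `N_H(A)` are disjoint
subsets of `V(H)`, this gives `2 |A| ≤ |V(H)| = n - α`.
-/

section

open Finset SimpleGraph

variable {V : Type*} {H H' : SimpleGraph V}

theorem SimpleGraph.neighborSet_eq_singleton_of_ncard_eq_one {u w : V}
    (h : (H.neighborSet u).ncard = 1) (huw : H.Adj u w) : H.neighborSet u = {w} := by
  obtain ⟨a, ha⟩ := Set.ncard_eq_one.1 h
  have : w ∈ H.neighborSet u := huw
  rw [ha, Set.mem_singleton_iff] at this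
  rw [ha, this]

theorem SimpleGraph.card_le_card_biUnion_neighborFinset [Fintype V] [DecidableEq V]
    [DecidableRel H.Adj]
    (hdeg : ∀ v w, H.Adj v w → H.degree v = H.degree w) {A : Finset V}
    (hA : ∀ a ∈ A, 0 < H.degree a) : #A ≤ #(A.biUnion fun a => H.neighborFinset a) := by
  set N := A.biUnion fun a => H.neighborFinset a
  have hsum_one : ∀ a, 0 < H.degree a →
      ∑ t ∈ H.neighborFinset a, (1 / H.degree a : ℚ) = 1 := by
    intro a ha
    rw [sum_const, card_neighborFinset_eq_degree, nsmul_eq_mul]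
    field_simp
  have hswap : ∑ a ∈ A, ∑ t ∈ H.neighborFinset a, (1 / H.degree t : ℚ) =
      ∑ t ∈ N, ∑ a ∈ A.filter (H.Adj t), (1 / H.degree t : ℚ) := by
    refine sum_comm' fun a t => ?_
    simp only [N, mem_neighborFinset, mem_filter, mem_biUnion]
    exact ⟨fun ⟨ha, hat⟩ => ⟨⟨ha, hat.symm⟩, a, ha, hat⟩,
      fun ⟨⟨ha, hta⟩, _⟩ => ⟨ha, hta.symm⟩⟩
  have hle_one : ∀ t ∈ N, ∑ a ∈ A.filter (H.Adj t), (1 / H.degree t : ℚ) ≤ 1 := by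
    intro t ht
    obtain ⟨a, -, hat⟩ := mem_biUnion.1 ht
    have ht_pos : 0 < H.degree t :=
      H.degree_pos_iff_exists_adj t |>.2 ⟨a, ((H.mem_neighborFinset _ _).1 hat).symm⟩
    calc ∑ a ∈ A.filter (H.Adj t), (1 / H.degree t : ℚ)
        ≤ ∑ a ∈ H.neighborFinset t, (1 / H.degree t : ℚ) :=
          sum_le_sum_of_subset_of_nonneg (fun a ha => by simpa using (mem_filter.1 ha).2)
            fun _ _ _ => by positivity
      _ = 1 := hsum_one t ht_pos
  have : (#A : ℚ) ≤ #N := calc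
    (#A : ℚ) = ∑ a ∈ A, ∑ t ∈ H.neighborFinset a, (1 / H.degree t : ℚ) := by
        rw [card_eq_sum_ones, Nat.cast_sum]
        refine sum_congr rfl fun a ha => ?_
        refine (hsum_one a (hA a ha)).symm.trans ?_
        refine sum_congr rfl fun t ht => ?_
        rw [hdeg a t ((H.mem_neighborFinset _ _).1 ht)]
    _ = ∑ t ∈ N, ∑ a ∈ A.filter (H.Adj t), (1 / H.degree t : ℚ) := hswap
    _ ≤ ∑ t ∈ N, 1 := sum_le_sum hle_one
    _ = #N := by simp
  exact_mod_cast this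

theorem SimpleGraph.ncard_neighborSet_eq_degree (v : V) [Fintype (H.neighborSet v)] :
    (H.neighborSet v).ncard = H.degree v := by
  rw [← card_neighborSet_eq_degree, ← Nat.card_eq_fintype_card, Nat.card_coe_set_eq]

variable [Finite V]

theorem SimpleGraph.ncard_neighborSet_pos {v w : V} (h : H.Adj v w) :
    0 < (H.neighborSet v).ncard :=
  (Set.ncard_pos (Set.toFinite _)).2 ⟨w, h⟩

theorem isElementary_iff : IsElementary H ↔ (∀ v, (H.neighborSet v).ncard ≤ 2) ∧
    ∀ v w, H.Adj v w → (H.neighborSet v).ncard = (H.neighborSet w).ncard := by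
  refine and_congr_right fun hle => ⟨fun h v w hvw => ?_, fun h v hv w hvw => h v w hvw ▸ hv⟩
  have := ncard_neighborSet_pos hvw
  have := ncard_neighborSet_pos hvw.symm
  have := hle v
  have := hle w
  have := fun hv => h v hv w hvw
  have := fun hw => h w hw v hvw.symm
  omega

namespace IsElementary

theorem ncard_neighborSet_eq (hH : IsElementary H) {v w : V} (h : H.Adj v w) :
    (H.neighborSet v).ncard = (H.neighborSet w).ncard :=
  (isElementary_iff.1 hH).2 v w h

theorem of_adj_iff_of_notMem (hH : IsElementary H) {X : Set V} {d : ℕ} (hd : d ≤ 2)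
    (hout : ∀ w ∉ X, ∀ y, H'.Adj w y ↔ H.Adj w y)
    (hX : ∀ x ∈ X, (H'.neighborSet x).ncard = d)
    (hbd : ∀ x ∈ X, ∀ w ∉ X, H.Adj x w → (H.neighborSet x).ncard = d) :
    IsElementary H' := by
  rw [isElementary_iff] at hH ⊢
  have hnb : ∀ w ∉ X, H'.neighborSet w = H.neighborSet w :=
    fun w hw => Set.ext (hout w hw)
  have hcross : ∀ a ∈ X, ∀ b ∉ X, H'.Adj a b → (H'.neighborSet b).ncard = d := by
    intro a ha b hb hab
    have hba : H.Adj b a := (hout b hb a).1 hab.symm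
    rw [hnb b hb, ← hH.2 a b hba.symm, hbd a ha b hb hba.symm]
  refine ⟨fun w => ?_, fun a b hab => ?_⟩
  · by_cases hw : w ∈ X
    · exact hX w hw ▸ hd
    · exact hnb w hw ▸ hH.1 w
  · by_cases ha : a ∈ X <;> by_cases hb : b ∈ X
    · rw [hX a ha, hX b hb]
    · rw [hX a ha, hcross a ha b hb hab]
    · rw [hX b hb, hcross b hb a ha hab.symm]
    · rw [hnb a ha, hnb b hb]
      exact hH.2 a b ((hout a ha b).1 hab)

theorem sup_edge (hH : IsElementary H) {v u : V} (hvu : v ≠ u)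
    (hv : v ∉ H.support) (hu : u ∉ H.support) : IsElementary (H ⊔ edge v u) := by
  have hv' : ∀ y, ¬H.Adj v y := fun y h => hv h.left_mem_support
  have hu' : ∀ y, ¬H.Adj u y := fun y h => hu h.left_mem_support
  refine hH.of_adj_iff_of_notMem (X := {v, u}) (d := 1) (by norm_num) (fun w hw y => ?_)
    (fun x hx => ?_) (fun x hx w _ hxw => ?_)
  · simp only [Set.mem_insert_iff, Set.mem_singleton_iff, not_or] at hw
    simp [edge_adj, hw.1, hw.2]
  · rcases hx with rfl | rfl
    · rw [show (H ⊔ edge x u).neighborSet x = {u} by ext; simp [edge_adj, hv']; grind]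
      exact Set.ncard_singleton u
    · rw [show (H ⊔ edge v x).neighborSet x = {v} by ext; simp [edge_adj, hu']; grind]
      exact Set.ncard_singleton v
  · rcases hx with rfl | rfl
    exacts [absurd hxw (hv' w), absurd hxw (hu' w)]

theorem sup_edge_sup_edge (hH : IsElementary H) {v u u' : V} (hv : v ∉ H.support)
    (huu' : H.Adj u u') (hu : (H.neighborSet u).ncard = 1) :
    IsElementary (H ⊔ edge v u ⊔ edge v u') := by
  have hv' : ∀ y, ¬H.Adj v y := fun y h => hv h.left_mem_support
  have hvu : v ≠ u := fun h => hv (h ▸ huu'.left_mem_support)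
  have hvu' : v ≠ u' := fun h => hv (h ▸ huu'.right_mem_support)
  have hAu : ∀ y, H.Adj u y ↔ y = u' :=
    Set.ext_iff.1 (neighborSet_eq_singleton_of_ncard_eq_one hu huu')
  have hAu' : ∀ y, H.Adj u' y ↔ y = u :=
    Set.ext_iff.1 (neighborSet_eq_singleton_of_ncard_eq_one
      (hH.ncard_neighborSet_eq huu' ▸ hu) huu'.symm)
  refine hH.of_adj_iff_of_notMem (X := {v, u, u'}) le_rfl (fun w hw y => ?_)
    (fun x hx => ?_) (fun x hx w hw hxw => ?_)
  · simp only [Set.mem_insert_iff, Set.mem_singleton_iff, not_or] at hw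
    simp [edge_adj, hw.1, hw.2.1, hw.2.2]
  · rcases hx with hx | hx | hx <;> subst x
    · rw [show (H ⊔ edge v u ⊔ edge v u').neighborSet v = {u, u'} by
          ext; simp [edge_adj, hv']; grind]
      exact Set.ncard_pair huu'.ne
    · rw [show (H ⊔ edge v u ⊔ edge v u').neighborSet u = {v, u'} by
          ext; simp [edge_adj, hAu]; grind]
      exact Set.ncard_pair hvu'
    · rw [show (H ⊔ edge v u ⊔ edge v u').neighborSet u' = {v, u} by
          ext; simp [edge_adj, hAu']; grind]
      exact Set.ncard_pair hvu
  · simp only [Set.mem_insert_iff, Set.mem_singleton_iff, not_or] at hw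
    rcases hx with rfl | rfl | rfl
    · exact absurd hxw (hv' w)
    · exact absurd ((hAu w).1 hxw) hw.2.2
    · exact absurd ((hAu' w).1 hxw) hw.2.1

theorem deleteEdges_sup_edge_sup_edge (hH : IsElementary H) {v u u' : V} (hv : v ∉ H.support)
    (huu' : H.Adj u u') (hu : (H.neighborSet u).ncard = 2) :
    IsElementary (H.deleteEdges {s(u, u')} ⊔ edge v u ⊔ edge v u') := by
  have hv' : ∀ y, ¬H.Adj v y := fun y h => hv h.left_mem_support
  have hvu : v ≠ u := fun h => hv (h ▸ huu'.left_mem_support)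
  have hvu' : v ≠ u' := fun h => hv (h ▸ huu'.right_mem_support)
  have hu' : (H.neighborSet u').ncard = 2 := hH.ncard_neighborSet_eq huu' ▸ hu
  refine hH.of_adj_iff_of_notMem (X := {v, u, u'}) le_rfl (fun w hw y => ?_)
    (fun x hx => ?_) (fun x hx w hw hxw => ?_)
  · simp only [Set.mem_insert_iff, Set.mem_singleton_iff, not_or] at hw
    simp [edge_adj, hw.1, hw.2.1, hw.2.2]
  · rcases hx with hx | hx | hx <;> subst x
    · rw [show (H.deleteEdges {s(u, u')} ⊔ edge v u ⊔ edge v u').neighborSet v = {u, u'} by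
          ext; simp [edge_adj, hv']; grind]
      exact Set.ncard_pair huu'.ne
    · rw [show (H.deleteEdges {s(u, u')} ⊔ edge v u ⊔ edge v u').neighborSet u =
          insert v (H.neighborSet u \ {u'}) by ext; simp [edge_adj]; grind,
        Set.ncard_exchange (fun h => hv (neighborSet_subset_support _ _ h)) huu', hu]
    · rw [show (H.deleteEdges {s(u, u')} ⊔ edge v u ⊔ edge v u').neighborSet u' =
          insert v (H.neighborSet u' \ {u}) by ext; simp [edge_adj]; grind,
        Set.ncard_exchange (fun h => hv (neighborSet_subset_support _ _ h)) huu'.symm, hu']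
  · rcases hx with rfl | rfl | rfl
    exacts [absurd hxw (hv' w), hu, hu']

end IsElementary

def IsMaximumElementary (G H : SimpleGraph V) : Prop :=
  H ≤ G ∧ IsElementary H ∧
    ∀ H' : SimpleGraph V, H' ≤ G → IsElementary H' → H'.support.ncard ≤ H.support.ncard

namespace IsMaximumElementary

variable {G : SimpleGraph V} {v u u' : V}

theorem mem_support_of_le (hH : IsMaximumElementary G H) (hH'G : H' ≤ G) (hH' : IsElementary H')
    (hsub : H.support ⊆ H'.support) (hv : v ∈ H'.support) : v ∈ H.support := by
  by_contra hvH
  have := Set.ncard_lt_ncard (hsub.ssubset_of_ne fun h => hvH (h ▸ hv))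
  exact (hH.2.2 H' hH'G hH').not_gt this

theorem mem_support_of_adj (hH : IsMaximumElementary G H) (hv : v ∉ H.support)
    (hvu : G.Adj v u) : u ∈ H.support := by
  by_contra hu
  refine hv (hH.mem_support_of_le (sup_le hH.1 ((edge_le_iff _).2 (Or.inr hvu)))
    (hH.2.1.sup_edge hvu.ne hv hu) (support_mono le_sup_left) ⟨u, ?_⟩)
  simp [edge_adj, hvu.ne]

theorem not_adj_of_adj (hH : IsMaximumElementary G H) (hv : v ∉ H.support)
    (hvu : G.Adj v u) (hvu' : G.Adj v u') : ¬H.Adj u u' := by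
  intro huu'
  have hvH' : ∀ H' : SimpleGraph V, H'.Adj v u → v ∈ H'.support := fun H' h => ⟨u, h⟩
  have hedges : edge v u ⊔ edge v u' ≤ G :=
    sup_le ((edge_le_iff _).2 (Or.inr hvu)) ((edge_le_iff _).2 (Or.inr hvu'))
  have hdeg := (isElementary_iff.1 hH.2.1).1 u
  have hpos := ncard_neighborSet_pos huu'
  obtain hu | hu : (H.neighborSet u).ncard = 1 ∨ (H.neighborSet u).ncard = 2 := by omega
  · refine hv (hH.mem_support_of_le ?_ (hH.2.1.sup_edge_sup_edge hv huu' hu)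
      (support_mono (le_sup_left.trans le_sup_left)) (hvH' _ (by simp [edge_adj, hvu.ne])))
    rw [sup_assoc]
    exact sup_le hH.1 hedges
  · refine hv (hH.mem_support_of_le ?_ (hH.2.1.deleteEdges_sup_edge_sup_edge hv huu' hu)
      ?_ (hvH' _ (by simp [edge_adj, hvu.ne])))
    · rw [sup_assoc]
      exact sup_le ((deleteEdges_le _).trans hH.1) hedges
    · rintro w ⟨x, hwx⟩
      by_cases hw : w = u ∨ w = u'
      · refine ⟨v, ?_⟩
        rcases hw with rfl | rfl <;> simp [edge_adj, hvu.ne.symm, hvu'.ne.symm]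
      · exact ⟨x, by simp [edge_adj]; grind⟩

theorem two_mul_ncard_neighborSet_le (hH : IsMaximumElementary G H) (hv : v ∉ H.support) :
    2 * (G.neighborSet v).ncard ≤ H.support.ncard := by
  classical
  have := Fintype.ofFinite V
  set A := G.neighborFinset v
  set N := A.biUnion fun a => H.neighborFinset a
  have hA : ∀ a ∈ A, G.Adj v a := fun a ha => (G.mem_neighborFinset v a).1 ha
  have hAN : #A ≤ #N := by
    refine card_le_card_biUnion_neighborFinset (fun a b hab => ?_) fun a ha => ?_
    · simpa only [ncard_neighborSet_eq_degree] using hH.2.1.ncard_neighborSet_eq hab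
    · obtain ⟨b, hab⟩ := hH.mem_support_of_adj hv (hA a ha)
      exact H.degree_pos_iff_exists_adj a |>.2 ⟨b, hab⟩
  have hdisj : Disjoint A N := disjoint_left.2 fun a ha haN => by
    obtain ⟨b, hb, hba⟩ := mem_biUnion.1 haN
    exact hH.not_adj_of_adj hv (hA b hb) (hA a ha) ((H.mem_neighborFinset _ _).1 hba)
  have hsub : A ∪ N ⊆ H.support.toFinset := by
    intro a ha
    rw [Set.mem_toFinset]
    rcases mem_union.1 ha with ha | ha
    · exact hH.mem_support_of_adj hv (hA a ha)
    · obtain ⟨b, -, hba⟩ := mem_biUnion.1 ha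
      exact ((H.mem_neighborFinset _ _).1 hba).right_mem_support
  calc 2 * (G.neighborSet v).ncard = #A + #A := by
        rw [ncard_neighborSet_eq_degree, card_neighborFinset_eq_degree]; ring
    _ ≤ #A + #N := by omega
    _ = #(A ∪ N) := (card_union_of_disjoint hdisj).symm
    _ ≤ #H.support.toFinset := card_le_card hsub
    _ = H.support.ncard := (Set.ncard_eq_toFinset_card' _).symm

end IsMaximumElementary

end

theorem stmt9_general {V : Type*} [Fintype V] (G H : SimpleGraph V) (hHG : H ≤ G)
    (hel : IsElementary H)
    (hmax : ∀ H' : SimpleGraph V, H' ≤ G → IsElementary H' →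
      H'.support.ncard ≤ H.support.ncard)
    (v : V) (hv : v ∉ H.support) :
    2 * (G.neighborSet v).ncard ≤ Fintype.card V - (Fintype.card V - H.support.ncard) := by
  rw [Nat.sub_sub_self (Nat.card_eq_fintype_card (α := V) ▸ Set.ncard_le_card H.support)]
  exact IsMaximumElementary.two_mul_ncard_neighborSet_le ⟨hHG, hel, hmax⟩ hv

theorem stmt9 {V : Type*} [Fintype V] (G H : SimpleGraph V) (hHG : H ≤ G)
    (hel : IsElementary H)
    (hodd : ∀ v : V, (H.neighborSet v).ncard = 2 →
      Odd ((H.connectedComponentMk v).supp.ncard))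
    (hmax : ∀ H' : SimpleGraph V, H' ≤ G → IsElementary H' →
      H'.support.ncard ≤ H.support.ncard)
    (v : V) (hv : v ∉ H.support) :
    2 * (G.neighborSet v).ncard ≤ Fintype.card V - (Fintype.card V - H.support.ncard) :=
  stmt9_general G H hHG hel hmax v hv
end

section
/- Let m ≤ n be even natural numbers. Then γ'_s(K_{m,n}) = min(2m, n). -/
open scoped Classical

/-!
A signed edge dominating function of `K_{m,n}` is an `m × n` sign matrix `g` with
`row a + col b - g (a, b) ≥ 1` for every cell `(a, b)`.

Lower bound: if every row sum is at least `2`, the total is at least `2m`. Otherwise some row sum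
`R` is at most `1`, hence at most `0` because row sums have the parity of `n`; the condition along
that row gives column `b` a sum of at least `1 - R + g (a₀, b)`, and these add up to
`n - (n - 1) R ≥ n`.

Upper bound: all line sums of the checkerboard `(-1)^(a+b)` vanish. Turning a set `F` of its `-1`
cells into `+1` gives total `2|F|`, and the condition holds as soon as every `+1` cell of the
checkerboard has a cell of `F` in its row or column. Such an `F` can be chosen with one cell in
each row (`|F| = m`), or, when `m ≤ n`, with one cell in each even column such that every odd row is
hit (`|F| = n / 2`).
-/

open Finset

lemma even_sum_of_eq_one_or_eq_neg_one {ι : Type*} [Fintype ι] {s : ι → ℤ}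
    (hs : ∀ i, s i = 1 ∨ s i = -1) (hι : Even (Fintype.card ι)) : Even (∑ i, s i) := by
  have hshift : Even (∑ i, (s i + 1)) :=
    even_sum _ fun i _ => by rcases hs i with h | h <;> simp [h]
  rw [sum_add_distrib, sum_const, card_univ, nsmul_one] at hshift
  simpa using hshift.sub (Int.even_coe_nat _ |>.2 hι)

lemma sum_fin_neg_one_pow_add (c : ℕ) {n : ℕ} (hn : Even n) :
    ∑ b : Fin n, (-1 : ℤ) ^ (c + b) = 0 := by
  simp_rw [pow_add, ← mul_sum]
  rw [Fin.sum_univ_eq_sum_range (fun b => (-1 : ℤ) ^ b), neg_one_geom_sum, if_pos hn, mul_zero]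

lemma two_le_sum_ite {ι : Type*} [Fintype ι] {P : ι → Prop} [DecidablePred P] {i : ι}
    (hi : P i) : 2 ≤ ∑ j, if P j then (2 : ℤ) else 0 := by
  simpa [hi] using single_le_sum (f := fun j => if P j then (2 : ℤ) else 0)
    (fun j _ => by positivity) (mem_univ i)

section CompleteBipartite

variable {α β : Type*}

def bipartiteEdge (p : α × β) : Sym2 (α ⊕ β) := s(.inl p.1, .inr p.2)

lemma bipartiteEdge_injective : Function.Injective (bipartiteEdge (α := α) (β := β)) := by
  rintro ⟨a, b⟩ ⟨a', b'⟩ h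
  simpa [bipartiteEdge] using h

variable [Fintype α] [Fintype β]

lemma edgeFin_completeBipartiteGraph :
    edgeFin (completeBipartiteGraph α β) = univ.image bipartiteEdge := by
  ext e
  simp [edgeFin, SimpleGraph.edgeSet_completeBipartiteGraph, bipartiteEdge]

lemma sum_edgeFin_completeBipartiteGraph (f : Sym2 (α ⊕ β) → ℤ) :
    ∑ e ∈ edgeFin (completeBipartiteGraph α β), f e = ∑ p, f (bipartiteEdge p) := by
  rw [edgeFin_completeBipartiteGraph, sum_image fun _ _ _ _ h => bipartiteEdge_injective h]

lemma closedNbhd_bipartiteEdge (a : α) (b : β) :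
    closedNbhd (completeBipartiteGraph α β) (bipartiteEdge (a, b)) =
      ({a} ×ˢ univ ∪ univ ×ˢ {b}).image bipartiteEdge := by
  ext e
  simp only [closedNbhd, edgeFin_completeBipartiteGraph, mem_filter, mem_image, mem_univ,
    true_and, mem_union, mem_product, mem_singleton, and_true]
  constructor
  · rintro ⟨⟨⟨a', b'⟩, rfl⟩, v, hv, hv'⟩
    refine ⟨(a', b'), ?_, rfl⟩
    simp only [bipartiteEdge, Sym2.mem_iff] at hv hv'
    rcases hv with rfl | rfl <;> simp_all
  · rintro ⟨⟨a', b'⟩, rfl | rfl, rfl⟩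
    · exact ⟨⟨_, rfl⟩, .inl a', by simp [bipartiteEdge]⟩
    · exact ⟨⟨_, rfl⟩, .inr b', by simp [bipartiteEdge]⟩

lemma sum_closedNbhd_bipartiteEdge (f : Sym2 (α ⊕ β) → ℤ) (a : α) (b : β) :
    ∑ e ∈ closedNbhd (completeBipartiteGraph α β) (bipartiteEdge (a, b)), f e =
      ∑ b', f (bipartiteEdge (a, b')) + ∑ a', f (bipartiteEdge (a', b)) -
        f (bipartiteEdge (a, b)) := by
  rw [closedNbhd_bipartiteEdge, sum_image fun _ _ _ _ h => bipartiteEdge_injective h,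
    eq_sub_iff_add_eq, ← sum_singleton (fun p => f (bipartiteEdge p)) (a, b)]
  have hinter : ({a} ×ˢ univ ∩ univ ×ˢ {b} : Finset (α × β)) = {(a, b)} := by
    ext ⟨x, y⟩
    simp [eq_comm, and_comm]
  rw [← hinter, sum_union_inter, sum_product, sum_product_right]
  simp

def IsSignedEdgeDomMatrix (g : α × β → ℤ) : Prop :=
  (∀ p, g p = 1 ∨ g p = -1) ∧ ∀ a b, 1 ≤ ∑ b', g (a, b') + ∑ a', g (a', b) - g (a, b)

lemma isSEDF_completeBipartiteGraph_iff (f : Sym2 (α ⊕ β) → ℤ) :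
    IsSEDF (completeBipartiteGraph α β) f ↔ IsSignedEdgeDomMatrix (f ∘ bipartiteEdge) := by
  simp only [IsSEDF, IsSignedEdgeDomMatrix, edgeFin_completeBipartiteGraph, forall_mem_image,
    mem_univ, forall_const, Prod.forall, sum_closedNbhd_bipartiteEdge, Function.comp_apply]

lemma gammaS_completeBipartiteGraph :
    gammaS (completeBipartiteGraph α β) =
      sInf {z | ∃ g : α × β → ℤ, IsSignedEdgeDomMatrix g ∧ z = ∑ p, g p} := by
  refine congrArg sInf (Set.ext fun z => ⟨?_, ?_⟩)
  · rintro ⟨f, hf, rfl⟩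
    exact ⟨f ∘ bipartiteEdge, (isSEDF_completeBipartiteGraph_iff f).1 hf,
      sum_edgeFin_completeBipartiteGraph f⟩
  · rintro ⟨g, hg, rfl⟩
    have hext : Function.extend bipartiteEdge g 0 ∘ bipartiteEdge = g :=
      funext (bipartiteEdge_injective.extend_apply g 0)
    refine ⟨Function.extend bipartiteEdge g 0, ?_, ?_⟩
    · rwa [isSEDF_completeBipartiteGraph_iff, hext]
    · rw [sum_edgeFin_completeBipartiteGraph]
      exact congrArg (fun h => ∑ p, h p) hext.symm

lemma IsSignedEdgeDomMatrix.min_le_sum {g : α × β → ℤ} (hg : IsSignedEdgeDomMatrix g)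
    (hβ : Even (Fintype.card β)) :
    min (2 * (Fintype.card α : ℤ)) (Fintype.card β) ≤ ∑ p, g p := by
  obtain ⟨hpm, hdom⟩ := hg
  by_cases hrows : ∀ a, 2 ≤ ∑ b, g (a, b)
  · calc min (2 * (Fintype.card α : ℤ)) (Fintype.card β)
        ≤ ∑ _a : α, 2 := by simp [mul_comm]
      _ ≤ ∑ a, ∑ b, g (a, b) := sum_le_sum fun a _ => hrows a
      _ = ∑ p, g p := (Fintype.sum_prod_type g).symm
  push Not at hrows
  obtain ⟨a₀, ha₀⟩ := hrows
  set R := ∑ b, g (a₀, b) with hR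
  have hR0 : R ≤ 0 := by
    obtain ⟨k, hk⟩ := even_sum_of_eq_one_or_eq_neg_one (fun b => hpm (a₀, b)) hβ
    omega
  have hβR : (Fintype.card β : ℤ) ≤ Fintype.card β * (1 - R) + R := by
    rcases isEmpty_or_nonempty β with hempty | hnonempty
    · simp [hR]
    · nlinarith [Fintype.card_pos (α := β)]
  calc min (2 * (Fintype.card α : ℤ)) (Fintype.card β)
      ≤ Fintype.card β * (1 - R) + R := (min_le_right _ _).trans hβR
    _ = ∑ b, (1 + g (a₀, b) - R) := by simp [sum_add_distrib, sum_sub_distrib, ← hR]; ring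
    _ ≤ ∑ b, ∑ a, g (a, b) := sum_le_sum fun b _ => by linarith [hdom a₀ b]
    _ = ∑ p, g p := (Fintype.sum_prod_type_right g).symm

end CompleteBipartite

section Checkerboard

variable {m n : ℕ}

def IsOddCellCover (F : Finset (Fin m × Fin n)) : Prop :=
  (∀ p ∈ F, Odd ((p.1 : ℕ) + p.2)) ∧
    ∀ (a : Fin m) (b : Fin n), Even ((a : ℕ) + b) → (∃ b', (a, b') ∈ F) ∨ ∃ a', (a', b) ∈ F

def flipMatrix (F : Finset (Fin m × Fin n)) (p : Fin m × Fin n) : ℤ :=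
  (-1) ^ ((p.1 : ℕ) + p.2) + if p ∈ F then 2 else 0

lemma sum_flipMatrix_row (hn : Even n) (F : Finset (Fin m × Fin n)) (a : Fin m) :
    ∑ b, flipMatrix F (a, b) = ∑ b, if (a, b) ∈ F then 2 else 0 := by
  simp [flipMatrix, sum_add_distrib, sum_fin_neg_one_pow_add _ hn]

lemma sum_flipMatrix_col (hm : Even m) (F : Finset (Fin m × Fin n)) (b : Fin n) :
    ∑ a, flipMatrix F (a, b) = ∑ a, if (a, b) ∈ F then 2 else 0 := by
  simp [flipMatrix, sum_add_distrib, add_comm _ (b : ℕ), sum_fin_neg_one_pow_add _ hm]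

lemma sum_flipMatrix (hn : Even n) (F : Finset (Fin m × Fin n)) :
    ∑ p, flipMatrix F p = 2 * #F := by
  rw [Fintype.sum_prod_type]
  simp_rw [sum_flipMatrix_row hn]
  rw [← Fintype.sum_prod_type (fun p => if p ∈ F then (2 : ℤ) else 0)]
  simp [sum_ite_mem, mul_comm]

lemma IsOddCellCover.isSignedEdgeDomMatrix (hm : Even m) (hn : Even n)
    {F : Finset (Fin m × Fin n)} (hF : IsOddCellCover F) :
    IsSignedEdgeDomMatrix (flipMatrix F) := by
  refine ⟨fun p => ?_, fun a b => ?_⟩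
  · by_cases hp : p ∈ F
    · rw [flipMatrix, if_pos hp, (hF.1 p hp).neg_one_pow]
      norm_num
    · simpa [flipMatrix, hp] using neg_one_pow_eq_or ℤ ((p.1 : ℕ) + p.2)
  rw [sum_flipMatrix_row hn, sum_flipMatrix_col hm]
  have hrow : 0 ≤ ∑ b', if (a, b') ∈ F then (2 : ℤ) else 0 :=
    sum_nonneg fun _ _ => by positivity
  have hcol : 0 ≤ ∑ a', if (a', b) ∈ F then (2 : ℤ) else 0 :=
    sum_nonneg fun _ _ => by positivity
  by_cases hab : (a, b) ∈ F
  · have := two_le_sum_ite (P := fun b' => (a, b') ∈ F) hab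
    rw [flipMatrix, if_pos hab, (hF.1 _ hab).neg_one_pow]
    linarith
  rcases Nat.even_or_odd ((a : ℕ) + b) with heven | hodd
  · rw [flipMatrix, if_neg hab, heven.neg_one_pow]
    rcases hF.2 a b heven with ⟨b', hb'⟩ | ⟨a', ha'⟩
    · linarith [two_le_sum_ite (P := fun b' => (a, b') ∈ F) hb']
    · linarith [two_le_sum_ite (P := fun a' => (a', b) ∈ F) ha']
  · rw [flipMatrix, if_neg hab, hodd.neg_one_pow]
    linarith

lemma exists_oddCellCover_card_eq_left (hmn : m ≤ n) (hn : Even n) :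
    ∃ F : Finset (Fin m × Fin n), IsOddCellCover F ∧ #F = m := by
  obtain ⟨t, rfl⟩ := hn
  let cell (a : Fin m) : Fin m × Fin (t + t) := (a, ⟨1 - a % 2, by omega⟩)
  have hcell : Function.Injective cell := fun a a' h => congrArg Prod.fst h
  refine ⟨univ.image cell, ⟨?_, fun a b _ => .inl ⟨_, mem_image_of_mem cell (mem_univ a)⟩⟩, ?_⟩
  · simp only [mem_image, mem_univ, true_and]
    rintro _ ⟨a, rfl⟩
    simp only [cell, Nat.odd_iff]
    omega
  · rw [card_image_of_injective _ hcell, card_univ, Fintype.card_fin]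

lemma exists_oddCellCover_two_mul_card_eq_right (hm : Even m) (hn : Even n) (hm0 : 0 < m)
    (hmn : m ≤ n) : ∃ F : Finset (Fin m × Fin n), IsOddCellCover F ∧ 2 * #F = n := by
  obtain ⟨t, rfl⟩ := hm
  obtain ⟨s, rfl⟩ := hn
  let cell (k : Fin s) : Fin (t + t) × Fin (s + s) :=
    (⟨2 * min (k : ℕ) (t - 1) + 1, by omega⟩, ⟨2 * k, by omega⟩)
  have hcell : Function.Injective cell := fun k k' h => by
    simp only [cell, Prod.ext_iff, Fin.ext_iff] at h
    exact Fin.ext (by omega)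
  refine ⟨univ.image cell, ⟨?_, fun a b hab => ?_⟩, ?_⟩
  · simp only [mem_image, mem_univ, true_and]
    rintro _ ⟨k, rfl⟩
    simp only [cell, Nat.odd_iff]
    omega
  · simp only [mem_image, mem_univ, true_and, cell, Prod.ext_iff, Fin.ext_iff]
    rw [Nat.even_iff] at hab
    rcases Nat.mod_two_eq_zero_or_one (b : ℕ) with hb | hb
    · exact .inr ⟨⟨2 * min ((b : ℕ) / 2) (t - 1) + 1, by omega⟩, ⟨(b : ℕ) / 2, by omega⟩, rfl,
        by dsimp only; omega⟩
    · exact .inl ⟨⟨2 * ((a : ℕ) / 2), by omega⟩, ⟨(a : ℕ) / 2, by omega⟩,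
        by dsimp only; omega, rfl⟩
  · rw [card_image_of_injective _ hcell, card_univ, Fintype.card_fin]
    omega

end Checkerboard

theorem stmt13 (m n : ℕ) (hmn : m ≤ n) (hm : Even m) (hn : Even n) :
    gammaS (completeBipartiteGraph (Fin m) (Fin n)) = min (2 * (m : ℤ)) (n : ℤ) := by
  rw [gammaS_completeBipartiteGraph]
  refine IsLeast.csInf_eq ⟨?_, ?_⟩
  · obtain ⟨F, hF, hcard⟩ : ∃ F : Finset (Fin m × Fin n),
        IsOddCellCover F ∧ 2 * (#F : ℤ) = min (2 * (m : ℤ)) n := by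
      rcases le_or_gt (2 * m) n with h | h
      · obtain ⟨F, hF, hcard⟩ := exists_oddCellCover_card_eq_left hmn hn
        exact ⟨F, hF, by omega⟩
      · obtain ⟨F, hF, hcard⟩ := exists_oddCellCover_two_mul_card_eq_right hm hn (by omega) hmn
        exact ⟨F, hF, by omega⟩
    exact ⟨flipMatrix F, hF.isSignedEdgeDomMatrix hm hn, by rw [sum_flipMatrix hn, hcard]⟩
  · rintro _ ⟨g, hg, rfl⟩
    simpa using hg.min_le_sum (by simpa using hn)
end
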